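/- arXiv:2103.11250 — 2 statements merged into one kernel-verified Lean document; each statement's English description precedes it below -/
import Mathlib

section
/- Let N be a positive integer and define g(x) := (i/(√2·N)) · H_N'(i x/√2) / H_N(i x/√2) for x ∈ ℂ with H_N(i x/√2) ≠ 0. Then g satisfies the Riccati differential equation −g'(x) − x·g(x) + 1 − N·g(x)² = 0 at every such point; this is the differential equation characterizing the high-temperature one-point resolvent of the Gaussian β-ensemble with parameter α = −N. -/
/-!
Put `u(x) = H_N(s x)` with `s = i/√2`. Then `g = u' / (N u)`, and since `s² = -1/2` the Hermite
equation `H'' - 2 z H' + 2 N H = 0` at `z = s x` becomes `u'' + x u' - N u = 0`. The logarithmic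
derivative substitution turns this linear equation into the Riccati equation.
-/

open Polynomial

/-- The physicists' Hermite polynomials, satisfying
`H_{n+1}(x) = 2 x H_n(x) - H_n'(x)`, equivalently
`H_n(x) = (-1)^n e^{x^2} (d/dx)^n e^{-x^2}`. -/
noncomputable def physHermite : ℕ → Polynomial ℂ
  | 0 => 1
  | n + 1 => 2 * X * physHermite n - derivative (physHermite n)

theorem physHermite_succ (n : ℕ) :
    physHermite (n + 1) = 2 * X * physHermite n - derivative (physHermite n) := rfl

theorem derivative_physHermite_succ (n : ℕ) :
    derivative (physHermite (n + 1)) = 2 * ((n + 1 : ℕ) : ℂ[X]) * physHermite n := by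
  induction n with
  | zero => simp [physHermite]
  | succ n ih =>
    rw [physHermite_succ (n + 1)]
    simp only [derivative_sub, derivative_mul, derivative_X, derivative_ofNat,
      derivative_natCast, ih]
    rw [physHermite_succ n]
    push_cast
    ring

theorem physHermite_ode (n : ℕ) :
    derivative (derivative (physHermite n)) - 2 * X * derivative (physHermite n)
      + 2 * (n : ℂ[X]) * physHermite n = 0 := by
  cases n with
  | zero => simp [physHermite]
  | succ n =>
    simp only [derivative_physHermite_succ, derivative_mul, derivative_ofNat,
      derivative_natCast]
    rw [physHermite_succ n]
    push_cast
    ring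

theorem Polynomial.hasDerivAt_eval_const_mul {𝕜 : Type*} [NontriviallyNormedField 𝕜]
    (P : 𝕜[X]) (s x : 𝕜) :
    HasDerivAt (fun y => P.eval (s * y)) (s * (derivative P).eval (s * x)) x := by
  have := (P.hasDerivAt (s * x)).comp x ((hasDerivAt_id' x).const_mul s)
  rwa [mul_one, mul_comm] at this

theorem riccati_of_linear_ode {𝕜 : Type*} [NontriviallyNormedField 𝕜] {u u' : 𝕜 → 𝕜}
    {u'' p q c x : 𝕜} (hu : HasDerivAt u (u' x) x) (hu' : HasDerivAt u' u'' x)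
    (hx : u x ≠ 0) (hc : c ≠ 0) (hode : u'' + p * u' x + c * q * u x = 0) :
    deriv (fun y => u' y / (c * u y)) x + p * (u' x / (c * u x))
      + c * (u' x / (c * u x)) ^ 2 + q = 0 := by
  have hg : HasDerivAt (fun y => u' y / (c * u y))
      ((u'' * (c * u x) - u' x * (c * u' x)) / (c * u x) ^ 2) x :=
    hu'.div (hu.const_mul c) (mul_ne_zero hc hx)
  rw [hg.deriv]
  field_simp
  linear_combination u x * hode

/-- The function `g(x) = (i/(√2 N)) H_N'(i x/√2)/H_N(i x/√2)` satisfies the Riccati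
equation `-g' - x g + 1 - N g² = 0` wherever `H_N(i x/√2) ≠ 0`: the high-temperature
Gaussian β-ensemble resolvent equation with `α = -N`. -/
theorem stmt_7 (N : ℕ) (hN : 0 < N) (g : ℂ → ℂ)
    (hg : ∀ y : ℂ, g y = (Complex.I / ((Real.sqrt 2 : ℂ) * N)) *
      ((derivative (physHermite N)).eval (Complex.I * y / (Real.sqrt 2 : ℂ)) /
        (physHermite N).eval (Complex.I * y / (Real.sqrt 2 : ℂ)))) :
    ∀ x : ℂ, (physHermite N).eval (Complex.I * x / (Real.sqrt 2 : ℂ)) ≠ 0 →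
      -deriv g x - x * g x + 1 - (N : ℂ) * g x ^ 2 = 0 := by
  intro x hx
  set s : ℂ := Complex.I / (Real.sqrt 2 : ℂ)
  set H := physHermite N
  have hs : s ^ 2 = -1 / 2 := by
    rw [div_pow, Complex.I_sq, ← Complex.ofReal_pow, Real.sq_sqrt zero_le_two]
    push_cast
    ring
  have hmul (y : ℂ) : Complex.I * y / (Real.sqrt 2 : ℂ) = s * y := by ring
  have hgu : g = fun y => s * (derivative H).eval (s * y) / (N * H.eval (s * y)) := by
    funext y
    rw [hg, hmul]
    ring
  have hode : s * (s * (derivative (derivative H)).eval (s * x))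
      + x * (s * (derivative H).eval (s * x)) + N * (-1) * H.eval (s * x) = 0 := by
    have := congrArg (eval (s * x)) (physHermite_ode N)
    simp only [eval_add, eval_sub, eval_mul, eval_ofNat, eval_X, eval_natCast, eval_zero] at this
    linear_combination s ^ 2 * this
      + 2 * (x * s * (derivative H).eval (s * x) - N * H.eval (s * x)) * hs
  have key := riccati_of_linear_ode (H.hasDerivAt_eval_const_mul s x)
    (((derivative H).hasDerivAt_eval_const_mul s x).const_mul s) (by rwa [← hmul])
    (Nat.cast_ne_zero.mpr hN.ne') hode
  rw [hgu]
  linear_combination -key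
end

section
/- Let N be a positive integer and a > 0 real. Define h(x) := −(1/N) · (L_N^{(a−1)})'(−x) / L_N^{(a−1)}(−x) for x ∈ ℂ with x ≠ 0 and L_N^{(a−1)}(−x) ≠ 0. Then h satisfies the Riccati differential equation −h'(x) − (a/x + 1)·h(x) + 1/x − N·h(x)² = 0 at every such point; this is the differential equation characterizing the high-temperature one-point resolvent of the Laguerre β-ensemble with parameters (α, a) replaced by (−N, −a). -/
/-!
With `y(x) = L(-x)`, the Laguerre equation `x L'' + (a - x) L' + N L = 0` is a linear
second-order equation for `y`, and `h = y' / (N y)` is a scaled logarithmic derivative of `y`;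
substituting `y' = N h y` turns the linear equation into the first-order Riccati equation for `h`.
The Laguerre equation is checked coefficientwise: it is the recurrence
`(k + 1)(k + a) c_{k+1} = (k - N) c_k`, which follows from `Γ(k + a + 1) = (k + a) Γ(k + a)`.
-/

open Polynomial

/-- The generalized Laguerre polynomial over `ℂ` (with real parameter `a`):
`L_N^{(a-1)}(x) = ∑_{k=0}^N (-1)^k (Γ(N+a) / (Γ(k+a) (N-k)! k!)) x^k`. -/
noncomputable def laguerre (N : ℕ) (a : ℝ) : Polynomial ℂ :=
  ∑ k ∈ Finset.range (N + 1),
    Polynomial.C (((-1 : ℝ) ^ k *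
      (Real.Gamma ((N : ℝ) + a) /
        (Real.Gamma ((k : ℝ) + a) * ((N - k).factorial : ℝ) * (k.factorial : ℝ))) : ℝ) : ℂ) *
      Polynomial.X ^ k

noncomputable def laguerreCoeff (N : ℕ) (a : ℝ) (k : ℕ) : ℝ :=
  (-1 : ℝ) ^ k * (Real.Gamma ((N : ℝ) + a) /
    (Real.Gamma ((k : ℝ) + a) * ((N - k).factorial : ℝ) * (k.factorial : ℝ)))

lemma coeff_laguerre (N : ℕ) (a : ℝ) (k : ℕ) :
    (laguerre N a).coeff k = if k ≤ N then (laguerreCoeff N a k : ℂ) else 0 := by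
  simp only [laguerre, laguerreCoeff, finsetSum_coeff, coeff_C_mul, coeff_X_pow, mul_ite,
    mul_one, mul_zero, Finset.sum_ite_eq, Finset.mem_range, Nat.lt_succ_iff]

lemma laguerreCoeff_succ {N : ℕ} {a : ℝ} (ha : 0 < a) {k : ℕ} (hk : k < N) :
    ((k : ℝ) + 1) * ((k : ℝ) + a) * laguerreCoeff N a (k + 1)
      = ((k : ℝ) - N) * laguerreCoeff N a k := by
  have hka : 0 < (k : ℝ) + a := by positivity
  have hGamma :
      Real.Gamma ((↑(k + 1) : ℝ) + a) = ((k : ℝ) + a) * Real.Gamma ((k : ℝ) + a) := by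
    rw [Nat.cast_succ, add_right_comm, Real.Gamma_add_one hka.ne']
  have hfac : ((N - k).factorial : ℝ) = ((N : ℝ) - k) * ((N - (k + 1)).factorial : ℝ) := by
    rw [show N - k = N - (k + 1) + 1 by omega, Nat.factorial_succ]
    push_cast [Nat.cast_sub (show k + 1 ≤ N by omega)]
    ring
  have hNk : (N : ℝ) - k ≠ 0 := sub_ne_zero.mpr (by exact_mod_cast hk.ne')
  have hΓ := (Real.Gamma_pos_of_pos hka).ne'
  rw [laguerreCoeff, laguerreCoeff, hGamma, hfac, Nat.factorial_succ]
  push_cast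
  field_simp
  ring

noncomputable def laguerreOperator {R : Type*} [CommRing R] (c n : R) (P : R[X]) : R[X] :=
  X * derivative (derivative P) + (C c - X) * derivative P + C n * P

lemma coeff_laguerreOperator {R : Type*} [CommRing R] (c n : R) (P : R[X]) (k : ℕ) :
    (laguerreOperator c n P).coeff k
      = ((k : R) + 1) * ((k : R) + c) * P.coeff (k + 1) - ((k : R) - n) * P.coeff k := by
  rcases k with _ | k
  · simp only [laguerreOperator, coeff_add, mul_coeff_zero, coeff_X_zero, sub_mul, coeff_sub,
      coeff_derivative, coeff_C_zero]
    push_cast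
    ring
  · simp only [laguerreOperator, coeff_add, coeff_X_mul, sub_mul, coeff_sub, coeff_C_mul,
      coeff_derivative]
    push_cast
    ring

lemma laguerreOperator_laguerre {N : ℕ} {a : ℝ} (ha : 0 < a) :
    laguerreOperator (a : ℂ) (N : ℂ) (laguerre N a) = 0 := by
  ext k
  rw [coeff_laguerreOperator, coeff_zero, sub_eq_zero]
  rcases lt_trichotomy k N with hk | rfl | hk
  · rw [coeff_laguerre, coeff_laguerre, if_pos (show k + 1 ≤ N from hk), if_pos hk.le]
    exact_mod_cast laguerreCoeff_succ ha hk
  · rw [coeff_laguerre, if_neg (by omega), sub_self]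
    ring
  · rw [coeff_laguerre, coeff_laguerre, if_neg (by omega), if_neg (by omega)]
    ring

lemma hasDerivAt_eval_neg_div_eval_neg {𝕜 : Type*} [NontriviallyNormedField 𝕜] (P Q : 𝕜[X])
    {x : 𝕜} (hQ : Q.eval (-x) ≠ 0) :
    HasDerivAt (fun y ↦ P.eval (-y) / Q.eval (-y))
      ((Q.derivative.eval (-x) * P.eval (-x) - P.derivative.eval (-x) * Q.eval (-x))
        / Q.eval (-x) ^ 2) x := by
  have hP := (P.hasDerivAt (-x)).comp x (hasDerivAt_neg x)
  have hQ' := (Q.hasDerivAt (-x)).comp x (hasDerivAt_neg x)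
  refine (hP.div hQ' hQ).congr_deriv ?_
  simp only [Function.comp_apply]
  ring

theorem riccati_of_laguerreOperator_eq_zero {𝕜 : Type*} [NontriviallyNormedField 𝕜]
    {P : 𝕜[X]} {c n : 𝕜} (hn : n ≠ 0)
    (hP : laguerreOperator c n P = 0)
    {h : 𝕜 → 𝕜} (hh : ∀ y, h y = -(1 / n) * ((derivative P).eval (-y) / P.eval (-y)))
    {x : 𝕜} (hx : x ≠ 0) (hPx : P.eval (-x) ≠ 0) :
    -deriv h x - (c / x + 1) * h x + 1 / x - n * h x ^ 2 = 0 := by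
  have hode := congrArg (eval (-x)) hP
  simp only [laguerreOperator, eval_add, eval_mul, eval_sub, eval_X, eval_C, eval_zero] at hode
  obtain rfl : h = _ := funext hh
  rw [((hasDerivAt_eval_neg_div_eval_neg _ _ hPx).const_mul (-(1 / n))).deriv]
  beta_reduce
  field_simp
  linear_combination P.eval (-x) * hode

/-- The function `h(x) = -(1/N) (L_N^{(a-1)})'(-x)/L_N^{(a-1)}(-x)` satisfies the Riccati
equation `-h' - (a/x + 1) h + 1/x - N h² = 0` wherever `x ≠ 0` and `L_N^{(a-1)}(-x) ≠ 0`: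
the high-temperature Laguerre β-ensemble resolvent equation with `(α,a) ↦ (-N,-a)`. -/
theorem stmt_15 (N : ℕ) (hN : 0 < N) (a : ℝ) (ha : 0 < a) (h : ℂ → ℂ)
    (hh : ∀ y : ℂ, h y = -(1 / (N : ℂ)) *
      ((derivative (laguerre N a)).eval (-y) / (laguerre N a).eval (-y))) :
    ∀ x : ℂ, x ≠ 0 → (laguerre N a).eval (-x) ≠ 0 →
      -deriv h x - ((a : ℂ) / x + 1) * h x + 1 / x - (N : ℂ) * h x ^ 2 = 0 :=
  fun _ hx hPx ↦ riccati_of_laguerreOperator_eq_zero (Nat.cast_ne_zero.mpr hN.ne')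
    (laguerreOperator_laguerre ha) hh hx hPx
end
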